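/- arXiv:1604.04609 — 9 statements merged into one kernel-verified Lean document; each statement's English description precedes it below -/
import Mathlib

section
/- Let X be a Tychonoff topological space. If the space C_h(X) (the continuous real-valued functions on X with the open-point topology) is separable, then every nonempty open subset of X has cardinality at least the continuum 𝔠; in particular the dispersion character Δ(X) ≥ 𝔠. -/
open TopologicalSpace Set Topology

/-- The point-open topology `p` on `C(X, ℝ)`. -/
def pointOpenTopology (X : Type*) [TopologicalSpace X] : TopologicalSpace C(X, ℝ) :=
  generateFrom {S | ∃ (x : X) (U : Set ℝ), IsOpen U ∧ S = {f : C(X, ℝ) | f x ∈ U}}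

/-- The open-point topology `h` on `C(X, ℝ)`. -/
def openPointTopology (X : Type*) [TopologicalSpace X] : TopologicalSpace C(X, ℝ) :=
  generateFrom {S | ∃ (V : Set X) (r : ℝ), IsOpen V ∧ S = {f : C(X, ℝ) | ∃ x ∈ V, f x = r}}

/-- The bi-point-open topology `ph` on `C(X, ℝ)`: generated by both kinds of subbasic sets. -/
def biPointOpenTopology (X : Type*) [TopologicalSpace X] : TopologicalSpace C(X, ℝ) :=
  generateFrom
    ({S | ∃ (x : X) (U : Set ℝ), IsOpen U ∧ S = {f : C(X, ℝ) | f x ∈ U}} ∪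
     {S | ∃ (V : Set X) (r : ℝ), IsOpen V ∧ S = {f : C(X, ℝ) | ∃ x ∈ V, f x = r}})

/-- The dispersion character: minimum cardinality of a nonempty open subset. -/
noncomputable def dispersionCharacter (X : Type*) [TopologicalSpace X] : Cardinal :=
  sInf {c | ∃ U : Set X, IsOpen U ∧ U.Nonempty ∧ c = Cardinal.mk U}

/-- A π-network: a family of nonempty subsets such that every nonempty open set contains one. -/
def IsPiNetwork {X : Type*} [TopologicalSpace X] (γ : Set (Set X)) : Prop :=
  (∀ A ∈ γ, A.Nonempty) ∧ ∀ U : Set X, IsOpen U → U.Nonempty → ∃ A ∈ γ, A ⊆ U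

/-- A π-base: a family of nonempty open subsets such that every nonempty open set contains one. -/
def IsPiBase {X : Type*} [TopologicalSpace X] (γ : Set (Set X)) : Prop :=
  (∀ A ∈ γ, IsOpen A ∧ A.Nonempty) ∧ ∀ U : Set X, IsOpen U → U.Nonempty → ∃ A ∈ γ, A ⊆ U

/-- A network. -/
def IsNetwork {X : Type*} [TopologicalSpace X] (𝒩 : Set (Set X)) : Prop :=
  ∀ (x : X) (U : Set X), IsOpen U → x ∈ U → ∃ N ∈ 𝒩, x ∈ N ∧ N ⊆ U

/-- An 𝓘-set. -/
def IsISet {X : Type*} [TopologicalSpace X] (A : Set X) : Prop :=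
  ∃ (f : X → ℝ) (a b : ℝ), Continuous f ∧ a < b ∧ Icc a b ⊆ f '' A

/-- A T₀-separating family. -/
def T0Separating {X : Type*} (γ : Set (Set X)) : Prop :=
  ∀ x y : X, x ≠ y → ∃ V ∈ γ, (x ∈ V ∧ y ∉ V) ∨ (y ∈ V ∧ x ∉ V)

/-- A zero-set. -/
def IsZeroSet {X : Type*} [TopologicalSpace X] (Z : Set X) : Prop :=
  ∃ f : X → ℝ, Continuous f ∧ Z = f ⁻¹' {0}

/-- Separable submetrizable: admits a coarser separable metrizable topology. -/
def SeparableSubmetrizable (X : Type*) [t : TopologicalSpace X] : Prop :=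
  ∃ t' : TopologicalSpace X, (∀ U : Set X, IsOpen[t'] U → IsOpen[t] U) ∧
    @SeparableSpace X t' ∧ @MetrizableSpace X t'

/-- Hypothesis (M). -/
def HypothesisM : Prop :=
  ∀ A : Set ℝ, Cardinal.mk A = Cardinal.continuum →
    ∃ f : A → ℝ, Continuous f ∧ Set.range f = Icc (0 : ℝ) 1

/-!
For every `r : ℝ` the subbasic set `[U, r]⁻` is open and nonempty (it contains the constant
function `r`), so it meets a countable dense set `D ⊆ C_h(X)`. Hence `ℝ` is covered by the
countably many images `f '' U`, `f ∈ D`, and `𝔠 ≤ ℵ₀ · #U` forces `𝔠 ≤ #U`.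
-/

open Cardinal

theorem continuum_le_of_continuum_le_aleph0_mul {κ : Cardinal} (h : 𝔠 ≤ ℵ₀ * κ) : 𝔠 ≤ κ := by
  have h' := h.trans (mul_le_max ℵ₀ κ)
  simpa [aleph0_lt_continuum.not_ge] using h'

universe u

theorem continuum_le_mk_of_countable_family_covers {ι α : Type u} {D : Set ι} (hD : D.Countable)
    (F : ι → α → ℝ) (hF : ∀ r, ∃ i ∈ D, ∃ a, F i a = r) : 𝔠 ≤ #α := by
  choose i hiD a hia using hF
  have hinj : Function.Injective fun r => ((⟨i r, hiD r⟩ : D), a r) := by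
    intro r s hrs
    simp only [Prod.mk.injEq, Subtype.mk.injEq] at hrs
    rw [← hia r, ← hia s, hrs.1, hrs.2]
  have h : lift.{u} #ℝ ≤ lift.{0} #(D × α) := lift_mk_le'.2 ⟨⟨_, hinj⟩⟩
  rw [mk_real, lift_continuum, lift_uzero, mk_prod, lift_id, lift_id] at h
  exact continuum_le_of_continuum_le_aleph0_mul
    (h.trans (mul_le_mul_left (mk_le_aleph0_iff.2 hD) _))

theorem isOpen_openPointTopology {X : Type*} [TopologicalSpace X] {V : Set X} (hV : IsOpen V)
    (r : ℝ) : IsOpen[openPointTopology X] {f : C(X, ℝ) | ∃ x ∈ V, f x = r} :=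
  isOpen_generateFrom_of_mem ⟨V, r, hV, rfl⟩

theorem Dense.exists_openPointTopology_apply_eq {X : Type*} [TopologicalSpace X]
    {D : Set C(X, ℝ)} (hD : @Dense _ (openPointTopology X) D) {U : Set X} (hU : IsOpen U)
    (hne : U.Nonempty) (r : ℝ) : ∃ f ∈ D, ∃ x ∈ U, f x = r := by
  obtain ⟨x, hx⟩ := hne
  obtain ⟨f, ⟨y, hyU, hfy⟩, hfD⟩ := @Dense.inter_open_nonempty _ (openPointTopology X) D hD _
    (isOpen_openPointTopology hU r) ⟨ContinuousMap.const X r, x, hx, rfl⟩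
  exact ⟨f, hfD, y, hyU, hfy⟩

theorem le_dispersionCharacter {X : Type*} [TopologicalSpace X] [Nonempty X] {c : Cardinal}
    (h : ∀ U : Set X, IsOpen U → U.Nonempty → c ≤ #U) : c ≤ dispersionCharacter X := by
  refine le_csInf ⟨_, univ, isOpen_univ, univ_nonempty, rfl⟩ ?_
  rintro _ ⟨U, hU, hne, rfl⟩
  exact h U hU hne

theorem stmt0_general {X : Type*} [TopologicalSpace X]
    (hsep : @SeparableSpace C(X, ℝ) (openPointTopology X)) :
    (∀ U : Set X, IsOpen U → U.Nonempty → Cardinal.continuum ≤ Cardinal.mk U) ∧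
      (Nonempty X → Cardinal.continuum ≤ dispersionCharacter X) := by
  obtain ⟨D, hDc, hDd⟩ := @exists_countable_dense _ (openPointTopology X) hsep
  have hopen : ∀ U : Set X, IsOpen U → U.Nonempty → 𝔠 ≤ #U := fun U hU hne =>
    continuum_le_mk_of_countable_family_covers hDc (fun (f : C(X, ℝ)) (x : U) => f x) fun r => by
      obtain ⟨f, hfD, x, hxU, hfx⟩ := hDd.exists_openPointTopology_apply_eq hU hne r
      exact ⟨f, hfD, ⟨x, hxU⟩, hfx⟩
  exact ⟨hopen, fun _ => le_dispersionCharacter hopen⟩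

/-- If `C_h(X)` is separable for a Tychonoff space `X`, then every nonempty
open subset of `X` has cardinality at least the continuum; in particular `Δ(X) ≥ 𝔠`. -/
theorem stmt0 {X : Type*} [TopologicalSpace X] [T35Space X]
    (hsep : @SeparableSpace C(X, ℝ) (openPointTopology X)) :
    (∀ U : Set X, IsOpen U → U.Nonempty → Cardinal.continuum ≤ Cardinal.mk U) ∧
      (Nonempty X → Cardinal.continuum ≤ dispersionCharacter X) :=
  stmt0_general hsep
end

section
/- Let X be a nonempty Tychonoff topological space. If C_ph(X) is separable, then X admits a coarser separable metrizable topology (X is separable submetrizable) and the dispersion character of X equals the continuum: Δ(X) = 𝔠. -/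
open TopologicalSpace Set Topology

/-!
A countable dense subset `{fₙ}` of `C_ph(X)` does two things. Since point-open sets are open in
`ph`, it separates the points of the Tychonoff space `X`, so `x ↦ (fₙ x)ₙ` is a continuous
injection into `ℝ^ℕ`; pulling back the product topology gives a coarser separable metrizable
topology, and `|X| ≤ 𝔠`. Since `[U, r]⁻` is open in `ph` for every nonempty open `U` and every
`r ∈ ℝ`, some `fₙ` takes the value `r` on `U`; hence `ℕ × U` maps onto `ℝ` and `|U| ≥ 𝔠`.
-/

open Function Cardinal

namespace Cardinal

lemma mk_le_continuum_of_injective {α : Type*} {e : α → ℕ → ℝ} (he : Injective e) :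
    #α ≤ 𝔠 := by
  have h := lift_mk_le_lift_mk_of_injective he
  rwa [mk_arrow, mk_real, lift_continuum, mk_nat, lift_aleph0,
    continuum_power_aleph0, lift_continuum, lift_le_continuum] at h

lemma continuum_le_mk_of_surjective {α : Type*} {g : ℕ × α → ℝ} (hg : Surjective g) :
    𝔠 ≤ #α := by
  have h := lift_mk_le_lift_mk_of_surjective hg
  rw [mk_real, lift_continuum, mk_prod, mk_nat, lift_aleph0, lift_mul, lift_aleph0, lift_lift]
    at h
  by_contra! hα
  exact (mul_lt_of_lt aleph0_le_continuum aleph0_lt_continuum (lift_lt_continuum.2 hα)).not_ge h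

end Cardinal

section

variable {X : Type*} [TopologicalSpace X]

lemma dispersionCharacter_eq [Nonempty X] {κ : Cardinal} (hX : #X ≤ κ)
    (hopen : ∀ U : Set X, IsOpen U → U.Nonempty → κ ≤ #U) : dispersionCharacter X = κ := by
  have huniv : #(univ : Set X) ∈ {c | ∃ U : Set X, IsOpen U ∧ U.Nonempty ∧ c = #U} :=
    ⟨univ, isOpen_univ, univ_nonempty, rfl⟩
  refine le_antisymm ((csInf_le' huniv).trans (mk_univ.trans_le hX)) (le_csInf ⟨_, huniv⟩ ?_)
  rintro _ ⟨U, hU, hUne, rfl⟩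
  exact hopen U hU hUne

lemma SeparableSubmetrizable.of_continuous_injective {Y : Type*} [TopologicalSpace Y]
    [SecondCountableTopology Y] [MetrizableSpace Y] {e : X → Y} (he : Continuous e)
    (hinj : Injective e) : SeparableSubmetrizable X := by
  let t : TopologicalSpace X := induced e ‹_›
  have hemb : @IsEmbedding X Y t _ e := @IsEmbedding.mk _ _ t _ _ ⟨rfl⟩ hinj
  exact ⟨t, fun U hU => hU.mono (continuous_iff_le_induced.mp he),
    (@IsInducing.secondCountableTopology _ _ t _ _ _ hemb.isInducing).to_separableSpace,
    @IsEmbedding.metrizableSpace _ _ t _ _ _ hemb⟩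

lemma continuous_eval_biPointOpenTopology (x : X) :
    Continuous[biPointOpenTopology X, _] fun f : C(X, ℝ) => f x :=
  continuous_def.2 fun U hU => isOpen_generateFrom_of_mem (Or.inl ⟨x, U, hU, rfl⟩)

lemma isOpen_biPointOpenTopology_exists_eq {V : Set X} (hV : IsOpen V) (r : ℝ) :
    IsOpen[biPointOpenTopology X] {f : C(X, ℝ) | ∃ x ∈ V, f x = r} :=
  isOpen_generateFrom_of_mem (Or.inr ⟨V, r, hV, rfl⟩)

variable {S : Set C(X, ℝ)}

lemma exists_mem_apply_ne_of_dense_biPointOpenTopology [T35Space X]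
    (hS : @Dense _ (biPointOpenTopology X) S) {x y : X} (hxy : x ≠ y) :
    ∃ f ∈ S, f x ≠ f y := by
  let := biPointOpenTopology X
  obtain ⟨f, hf, hfxy⟩ := separatesPoints_continuous_of_t35Space hxy
  have hopen : IsOpen {g : C(X, ℝ) | g x ≠ g y} :=
    isOpen_ne_fun (continuous_eval_biPointOpenTopology x) (continuous_eval_biPointOpenTopology y)
  obtain ⟨g, hgxy, hgS⟩ := hS.inter_open_nonempty _ hopen ⟨⟨f, hf⟩, hfxy⟩
  exact ⟨g, hgS, hgxy⟩

lemma exists_mem_apply_eq_of_dense_biPointOpenTopology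
    (hS : @Dense _ (biPointOpenTopology X) S) {U : Set X} (hU : IsOpen U) (hUne : U.Nonempty)
    (r : ℝ) : ∃ f ∈ S, ∃ x ∈ U, f x = r := by
  obtain ⟨x, hx⟩ := hUne
  obtain ⟨f, hfU, hfS⟩ := @Dense.inter_open_nonempty _ (biPointOpenTopology X) _ hS _
    (isOpen_biPointOpenTopology_exists_eq hU r) ⟨ContinuousMap.const X r, x, hx, rfl⟩
  exact ⟨f, hfS, hfU⟩

end

/-- For nonempty Tychonoff `X`, separability of `C_ph(X)` implies `X` is
separable submetrizable and `Δ(X) = 𝔠`. -/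
theorem stmt2 {X : Type*} [TopologicalSpace X] [T35Space X] [Nonempty X]
    (hsep : @SeparableSpace C(X, ℝ) (biPointOpenTopology X)) :
    SeparableSubmetrizable X ∧ dispersionCharacter X = Cardinal.continuum := by
  obtain ⟨S, hScount, hS⟩ := @exists_countable_dense _ (biPointOpenTopology X) hsep
  obtain ⟨F, rfl⟩ := hScount.exists_eq_range (@Dense.nonempty _ (biPointOpenTopology X) _ _ hS)
  have hinj : Injective fun x n => F n x := by
    intro x y hxy
    by_contra hne
    obtain ⟨_, ⟨n, rfl⟩, hn⟩ := exists_mem_apply_ne_of_dense_biPointOpenTopology hS hne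
    exact hn (congrFun hxy n)
  refine ⟨.of_continuous_injective (continuous_pi fun n => (F n).continuous) hinj,
    dispersionCharacter_eq (mk_le_continuum_of_injective hinj) fun U hU hUne => ?_⟩
  refine continuum_le_mk_of_surjective (g := fun p : ℕ × U => F p.1 p.2) fun r => ?_
  obtain ⟨_, ⟨n, rfl⟩, x, hx, rfl⟩ := exists_mem_apply_eq_of_dense_biPointOpenTopology hS hU hUne r
  exact ⟨(n, ⟨x, hx⟩), rfl⟩
end

section
/- Let X be a Tychonoff space. If C_ph(X) is separable, then X has a countable T₀-separating family of zero-sets. -/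
open TopologicalSpace Set Topology

/-!
Only the point-open half of the bi-point-open topology is needed. Given distinct points `x, y`
of the Tychonoff space `X`, some continuous `f` has `f x < 1/2 < f y`; these two conditions cut
out a nonempty point-open set, which therefore meets a countable dense set `D`. Hence the
sublevel sets `{g ≤ 1/2}`, `g ∈ D`, separate points, and each of them is the zero-set of
`max (g - 1/2) 0`.
-/

section

variable {X : Type*} [TopologicalSpace X]

lemma biPointOpenTopology_le_pointOpenTopology :
    biPointOpenTopology X ≤ pointOpenTopology X :=
  generateFrom_anti subset_union_left

lemma separableSpace_pointOpenTopology_of_biPointOpenTopology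
    (h : @SeparableSpace C(X, ℝ) (biPointOpenTopology X)) :
    @SeparableSpace C(X, ℝ) (pointOpenTopology X) := by
  obtain ⟨D, hD_countable, hD_dense⟩ := @exists_countable_dense _ (biPointOpenTopology X) h
  exact @SeparableSpace.mk _ (pointOpenTopology X) ⟨D, hD_countable,
    fun f => closure.mono biPointOpenTopology_le_pointOpenTopology (hD_dense f)⟩

lemma isOpen_pointOpenTopology_setOf_apply_mem (x : X) {U : Set ℝ} (hU : IsOpen U) :
    IsOpen[pointOpenTopology X] {f : C(X, ℝ) | f x ∈ U} :=
  isOpen_generateFrom_of_mem ⟨x, U, hU, rfl⟩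

lemma isZeroSet_setOf_le {g : X → ℝ} (hg : Continuous g) (c : ℝ) :
    IsZeroSet {z | g z ≤ c} :=
  ⟨fun z => max (g z - c) 0, by fun_prop, by ext z; simp⟩

lemma exists_continuousMap_apply_eq_zero_apply_eq_one [CompletelyRegularSpace X] [T1Space X]
    {x y : X} (hxy : x ≠ y) : ∃ f : C(X, ℝ), f x = 0 ∧ f y = 1 := by
  obtain ⟨f, hf, hfx, hfy⟩ :=
    CompletelyRegularSpace.completely_regular x {y} isClosed_singleton hxy
  exact ⟨⟨fun z => f z, continuous_subtype_val.comp hf⟩, by simp [hfx], by simp [hfy rfl]⟩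

lemma t0Separating_setOf_le_of_dense [CompletelyRegularSpace X] [T1Space X]
    {D : Set C(X, ℝ)} (hD : @Dense _ (pointOpenTopology X) D) (c : ℝ) :
    T0Separating ((fun g : C(X, ℝ) => {z | g z ≤ c}) '' D) := by
  let := pointOpenTopology X
  intro x y hxy
  obtain ⟨f, hfx, hfy⟩ := exists_continuousMap_apply_eq_zero_apply_eq_one hxy
  let W : Set C(X, ℝ) := {g | g x ∈ Iio c} ∩ {g | g y ∈ Ioi c}
  have hW : IsOpen W :=
    (isOpen_pointOpenTopology_setOf_apply_mem x isOpen_Iio).inter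
      (isOpen_pointOpenTopology_setOf_apply_mem y isOpen_Ioi)
  have hW_nonempty : W.Nonempty := by
    refine ⟨f + ContinuousMap.const X (c - 1 / 2), ?_, ?_⟩
    · change f x + (c - 1 / 2) < c
      linarith
    · change c < f y + (c - 1 / 2)
      linarith
  obtain ⟨g, ⟨hgx, hgy⟩, hgD⟩ := hD.inter_open_nonempty W hW hW_nonempty
  exact ⟨{z | g z ≤ c}, ⟨g, hgD, rfl⟩,
    Or.inl ⟨le_of_lt (show g x < c from hgx), not_le.mpr (show c < g y from hgy)⟩⟩

end

/-- For Tychonoff `X`, if `C_ph(X)` is separable then `X` has a countable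
T₀-separating family of zero-sets. -/
theorem stmt4 {X : Type*} [TopologicalSpace X] [T35Space X]
    (hsep : @SeparableSpace C(X, ℝ) (biPointOpenTopology X)) :
    ∃ γ : Set (Set X), γ.Countable ∧ T0Separating γ ∧ ∀ Z ∈ γ, IsZeroSet Z := by
  obtain ⟨D, hD_countable, hD_dense⟩ := @exists_countable_dense _ (pointOpenTopology X)
    (separableSpace_pointOpenTopology_of_biPointOpenTopology hsep)
  refine ⟨(fun g : C(X, ℝ) => {z | g z ≤ 1 / 2}) '' D, hD_countable.image _,
    t0Separating_setOf_le_of_dense hD_dense _, ?_⟩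
  rintro Z ⟨g, -, rfl⟩
  exact isZeroSet_setOf_le g.continuous _
end

section
/- Let X be a Tychonoff space that has a π-network consisting of nontrivial connected sets and admits a coarser separable metrizable topology. Then C_ph(X) is separable. -/
open TopologicalSpace Set Topology

/-!
A coarser separable metrizable topology yields a continuous injection `F` of `X` into the
Hilbert cube `Q`. As `C(Q, ℝ)` is separable and every real function on a finite subset of `Q`
extends continuously, composing a countable dense subset of `C(Q, ℝ)` with `F` gives a countable
`D ⊆ C(X, ℝ)` which is dense in `ℝ^X`. Such a `D` is dense in `C_ph(X)`: a point-open condition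
on `f` is an open condition on `ℝ^X` around `f`, while `f ∈ [V, r]⁻` is implied by `f` taking
values below and above `r` on a connected `A ⊆ V` from the π-network, an open condition on `ℝ^X`
which is dense because `A` is infinite.
-/

open Function

lemma ContinuousMap.exists_eqOn_of_finite {Z : Type*} [TopologicalSpace Z] [NormalSpace Z]
    [T1Space Z] {s : Set Z} (hs : s.Finite) (v : Z → ℝ) : ∃ g : C(Z, ℝ), EqOn g v s := by
  have : DiscreteTopology s := hs.isDiscrete.to_subtype
  obtain ⟨g, hg⟩ := ContinuousMap.exists_restrict_eq hs.isClosed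
    ⟨fun z : s => v z, continuous_of_discreteTopology⟩
  exact ⟨g, fun z hz => congr($hg ⟨z, hz⟩)⟩

lemma ContinuousMap.denseRange_coe {Z : Type*} [TopologicalSpace Z] [NormalSpace Z]
    [T1Space Z] : DenseRange ((⇑) : C(Z, ℝ) → Z → ℝ) := by
  refine fun v => mem_closure_iff_nhds.2 fun N hN => ?_
  rw [nhds_pi, Filter.mem_pi'] at hN
  obtain ⟨s, t, ht, hst⟩ := hN
  obtain ⟨g, hg⟩ := ContinuousMap.exists_eqOn_of_finite s.finite_toSet v
  exact ⟨g, hst fun z hz => hg hz ▸ mem_of_mem_nhds (ht z), g, rfl⟩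

lemma exists_countable_dense_coe_of_continuous_injective {X Z : Type*} [TopologicalSpace X]
    [TopologicalSpace Z] [NormalSpace Z] [T1Space Z] [SeparableSpace C(Z, ℝ)] {F : X → Z}
    (hF : Continuous F) (hinj : Injective F) :
    ∃ D : Set C(X, ℝ), D.Countable ∧ Dense ((⇑) '' D : Set (X → ℝ)) := by
  obtain ⟨S, hS, hSd⟩ := exists_countable_dense C(Z, ℝ)
  have hcomp : Continuous fun u : Z → ℝ => u ∘ F := continuous_pi fun x => continuous_apply (F x)
  have hdense : DenseRange fun h : C(Z, ℝ) => ⇑h ∘ F :=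
    hinj.surjective_comp_right.denseRange.comp ContinuousMap.denseRange_coe hcomp
  refine ⟨(fun h => h.comp ⟨F, hF⟩) '' S, hS.image _, ?_⟩
  rw [image_image]
  exact hdense.dense_image (hcomp.comp continuous_coeFun) hSd

lemma SeparableSubmetrizable.exists_continuous_injective {X : Type*} [TopologicalSpace X]
    (h : SeparableSubmetrizable X) :
    ∃ F : X → ℕ → unitInterval, Continuous F ∧ Injective F := by
  obtain ⟨t', hle, hsep, hmet⟩ := h
  let := @metrizableSpaceMetric X t' hmet
  obtain ⟨F, hF⟩ := Metric.PiNatEmbed.exists_embedding_to_hilbert_cube (X := X)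
  exact ⟨F, continuous_le_dom (fun U => hle U) hF.continuous, hF.injective⟩

section Crossing

variable {X : Type*}

def crossing (A : Set X) (r : ℝ) : Set (X → ℝ) :=
  {u | ∃ a ∈ A, ∃ b ∈ A, u a < r ∧ r < u b}

lemma isOpen_crossing (A : Set X) (r : ℝ) : IsOpen (crossing A r) := by
  have : crossing A r = ⋃ a ∈ A, ⋃ b ∈ A, {u | u a < r} ∩ {u | r < u b} := by
    ext; simp only [crossing, mem_ofPred_eq, mem_iUnion, mem_inter_iff, exists_prop]
  rw [this]
  exact isOpen_biUnion fun a _ => isOpen_biUnion fun b _ =>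
    (isOpen_lt (continuous_apply a) continuous_const).inter
      (isOpen_lt continuous_const (continuous_apply b))

lemma dense_crossing {A : Set X} (hA : A.Infinite) (r : ℝ) :
    Dense (crossing A r) := by
  classical
  refine fun u => mem_closure_iff_nhds.2 fun N hN => ?_
  rw [nhds_pi, Filter.mem_pi] at hN
  obtain ⟨I, hI, t, ht, hIt⟩ := hN
  obtain ⟨a, ⟨haA, haI⟩, b, ⟨hbA, hbI⟩, hab⟩ := (hA.sdiff hI).nontrivial
  refine ⟨update (update u a (r - 1)) b (r + 1), hIt fun i hi => ?_, a, haA, b, hbA, ?_, ?_⟩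
  · rw [update_of_ne (ne_of_mem_of_not_mem hi hbI), update_of_ne (ne_of_mem_of_not_mem hi haI)]
    exact mem_of_mem_nhds (ht i)
  · simp [update_of_ne hab]
  · simp

lemma exists_eq_of_mem_crossing [TopologicalSpace X] {A : Set X} {r : ℝ}
    (hA : IsPreconnected A) {g : X → ℝ} (hg : ContinuousOn g A) (h : g ∈ crossing A r) :
    ∃ z ∈ A, g z = r := by
  obtain ⟨a, ha, b, hb, hlt, hgt⟩ := h
  exact hA.intermediate_value ha hb hg ⟨hlt.le, hgt.le⟩

end Crossing

lemma mem_closure_biInter_of_finite {α ι : Type*} [TopologicalSpace α] {p : α} {F : Set ι}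
    (hF : F.Finite) {T : ι → Set α} (hT : ∀ i ∈ F, IsOpen (T i))
    (hp : ∀ i ∈ F, p ∈ T i ∨ Dense (T i)) : p ∈ closure (⋂ i ∈ F, T i) := by
  induction F, hF using Set.Finite.induction_on with
  | empty => simp
  | @insert i F _ hF ih =>
    rw [biInter_insert]
    have hpF := ih (fun j hj => hT j (.inr hj)) (fun j hj => hp j (.inr hj))
    rcases hp i (.inl rfl) with hpi | hdense
    · exact (hT i (.inl rfl)).inter_closure ⟨hpi, hpF⟩
    · have hopen : IsOpen (⋂ j ∈ F, T j) := hF.isOpen_biInter fun j hj => hT j (.inr hj)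
      rw [inter_comm]
      exact closure_minimal (hdense.open_subset_closure_inter hopen) isClosed_closure hpF

lemma dense_biPointOpenTopology {X : Type*} [TopologicalSpace X] {γ : Set (Set X)}
    (hγ : IsPiNetwork γ) (hγA : ∀ A ∈ γ, IsPreconnected A ∧ A.Infinite) {D : Set C(X, ℝ)}
    (hD : Dense ((⇑) '' D : Set (X → ℝ))) : @Dense _ (biPointOpenTopology X) D := by
  let := biPointOpenTopology X
  refine ((isTopologicalBasis_of_subbasis (t := biPointOpenTopology X) rfl).dense_iff).2 ?_
  rintro _ ⟨F, ⟨hF, hFsub⟩, rfl⟩ ⟨f, hf⟩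
  have hsubbasic : ∀ S ∈ F, ∃ T : Set (X → ℝ), IsOpen T ∧ (⇑f ∈ T ∨ Dense T) ∧
      ∀ g : C(X, ℝ), ⇑g ∈ T → g ∈ S := by
    intro S hS
    rcases hFsub hS with ⟨x, U, hU, rfl⟩ | ⟨V, r, hV, rfl⟩
    · exact ⟨{u | u x ∈ U}, hU.preimage (continuous_apply x), .inl (hf _ hS), fun g hg => hg⟩
    · obtain ⟨y, hy, -⟩ := hf _ hS
      obtain ⟨A, hAγ, hAV⟩ := hγ.2 V hV ⟨y, hy⟩
      refine ⟨crossing A r, isOpen_crossing A r, .inr (dense_crossing (hγA A hAγ).2 r),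
        fun g hg => ?_⟩
      obtain ⟨z, hz, hgz⟩ := exists_eq_of_mem_crossing (hγA A hAγ).1 g.continuous.continuousOn hg
      exact ⟨z, hAV hz, hgz⟩
  choose! T hTo hTf hTS using hsubbasic
  have hopen : IsOpen (⋂ S ∈ F, T S) := hF.isOpen_biInter hTo
  obtain ⟨_, hgT, g, hgD, rfl⟩ := hD.inter_open_nonempty _ hopen
    (closure_nonempty_iff.1 ⟨_, mem_closure_biInter_of_finite hF hTo hTf⟩)
  exact ⟨g, mem_sInter.2 fun S hS => hTS S hS g (mem_iInter₂.1 hgT S hS), hgD⟩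

theorem stmt6_general {X : Type*} [TopologicalSpace X]
    (hγ : ∃ γ : Set (Set X), IsPiNetwork γ ∧ ∀ A ∈ γ, IsConnected A ∧ A.Nontrivial)
    (hsub : SeparableSubmetrizable X) :
    @SeparableSpace C(X, ℝ) (biPointOpenTopology X) := by
  obtain ⟨F, hF, hinj⟩ := hsub.exists_continuous_injective
  have : T1Space X := t1Space_of_injective_of_continuous hinj hF
  obtain ⟨γ, hγ, hγA⟩ := hγ
  obtain ⟨D, hDc, hD⟩ := exists_countable_dense_coe_of_continuous_injective hF hinj
  refine @SeparableSpace.mk _ (biPointOpenTopology X) ⟨D, hDc, dense_biPointOpenTopology hγ ?_ hD⟩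
  exact fun A hA => ⟨(hγA A hA).1.isPreconnected,
    (hγA A hA).1.isPreconnected.infinite_of_nontrivial (hγA A hA).2⟩

/-- A Tychonoff space with a π-network of nontrivial connected sets which is
separable submetrizable has separable `C_ph(X)`. -/
theorem stmt6 {X : Type*} [TopologicalSpace X] [T35Space X]
    (hγ : ∃ γ : Set (Set X), IsPiNetwork γ ∧ ∀ A ∈ γ, IsConnected A ∧ A.Nontrivial)
    (hsub : SeparableSubmetrizable X) :
    @SeparableSpace C(X, ℝ) (biPointOpenTopology X) :=
  stmt6_general hγ hsub
end

section
/- If X is a nonempty perfect Polish space (a separable, completely metrizable space without isolated points), then C_ph(X) is separable. -/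
open TopologicalSpace Set Topology

/-!
Given finitely many point conditions `f t ∈ U` and hitting conditions `∃ y ∈ V, f y = r`, pick
for each hitting condition a point of `V` outside the finite set of conditioned points (possible
since `X` is perfect), and surround all these points by pairwise disjoint small balls. On each
ball a suitable function can be prescribed independently using a bump function: a rational
constant near a conditioned point, and near a hitting point a function whose range on the ball
contains `[-N, N]` with `N > |r|`; such a function exists because every nonempty open subset of
a perfect Polish space contains a Cantor set, which maps continuously onto `[0, 1]` (Tietze).
With balls centred on a countable dense set, of radii `1 / (m + 1)`, and rational data, these
functions form a countable family meeting every nonempty basic open set of `C_ph(X)`.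
-/

open Metric

namespace BiPointOpen

section Bump

variable {X : Type*} [PseudoMetricSpace X]

noncomputable def bump (c : X) (r : ℝ) : C(X, ℝ) where
  toFun x := max 0 (min 1 (2 - dist x c / r))
  continuous_toFun := by fun_prop

lemma bump_eq_one {c x : X} {r : ℝ} (hr : 0 < r) (hx : x ∈ ball c r) : bump c r x = 1 := by
  have : 1 < 2 - dist x c / r := by
    rw [mem_ball, ← div_lt_one hr] at hx
    linarith
  simp [bump, min_eq_left this.le]

lemma bump_eq_zero {c x : X} {r : ℝ} (hr : 0 < r) (hx : x ∉ ball c (2 * r)) :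
    bump c r x = 0 := by
  have : 2 - dist x c / r ≤ 0 := by
    rw [mem_ball, not_lt, ← le_div_iff₀ hr] at hx
    linarith
  simp [bump, min_eq_right (this.trans zero_le_one), this]

lemma sum_bump_mul_apply {ι : Type*} {P : Finset ι} {c : ι → X} {r : ι → ℝ}
    (hr : ∀ p, 0 < r p) (hdisj : (P : Set ι).PairwiseDisjoint fun p => ball (c p) (2 * r p))
    (g : ι → C(X, ℝ)) {p : ι} (hp : p ∈ P) {z : X} (hz : z ∈ ball (c p) (r p)) :
    (∑ q ∈ P, bump (c q) (r q) * g q) z = g p z := by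
  have hz' : z ∈ ball (c p) (2 * r p) := ball_subset_ball (by linarith [hr p]) hz
  rw [ContinuousMap.sum_apply, Finset.sum_eq_single_of_mem p hp]
  · simp [bump_eq_one (hr p) hz]
  · intro q hq hqp
    have : z ∉ ball (c q) (2 * r q) := fun hzq =>
      (hdisj hq hp hqp).ne_of_mem hzq hz' rfl
    simp [bump_eq_zero (hr q) this]

end Bump

noncomputable def radius (m : ℕ) : ℝ := ((m : ℝ) + 1)⁻¹

lemma radius_pos (m : ℕ) : 0 < radius m := by
  unfold radius; positivity

lemma exists_ball_subset_of_denseRange {X ι : Type*} [PseudoMetricSpace X] {c : ι → X}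
    (hc : DenseRange c) {U : Set X} (hU : IsOpen U)
    {x : X} (hx : x ∈ U) :
    ∃ i : ι × ℕ, x ∈ ball (c i.1) (radius i.2) ∧ ball (c i.1) (2 * radius i.2) ⊆ U := by
  obtain ⟨ε, hε, hball⟩ := isOpen_iff.1 hU x hx
  obtain ⟨m, hm⟩ := exists_nat_one_div_lt (div_pos hε three_pos)
  have hmε : 3 * radius m < ε := by
    rw [radius, ← one_div]; linarith
  obtain ⟨k, hk⟩ := hc.exists_dist_lt x (radius_pos m)
  refine ⟨(k, m), mem_ball.2 hk, fun y hy => hball ?_⟩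
  rw [mem_ball] at hy ⊢
  linarith [dist_triangle y (c k) x, dist_comm x (c k)]

lemma exists_pairwiseDisjoint_balls {X ι : Type*} [MetricSpace X] {c : ι → X}
    (hc : DenseRange c) (P : Finset X) {W : X → Set X} (hWo : ∀ p, IsOpen (W p))
    (hW : ∀ p, p ∈ W p) :
    ∃ i : X → ι × ℕ, (∀ p, p ∈ ball (c (i p).1) (radius (i p).2) ∧
        ball (c (i p).1) (2 * radius (i p).2) ⊆ W p) ∧
      (P : Set X).PairwiseDisjoint fun p => ball (c (i p).1) (2 * radius (i p).2) := by
  obtain ⟨U, hU, hUdisj⟩ := P.finite_toSet.t2_separation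
  choose i hi using fun p =>
    exists_ball_subset_of_denseRange hc ((hWo p).inter (hU p).2) ⟨hW p, (hU p).1⟩
  refine ⟨i, fun p => ⟨(hi p).1, (hi p).2.trans inter_subset_left⟩, ?_⟩
  exact hUdisj.mono_on fun p _ => (hi p).2.trans inter_subset_right

theorem exists_continuousMap_Icc_subset_image {X : Type*} [MetricSpace X] [CompleteSpace X]
    [PerfectSpace X] {U : Set X} (hU : IsOpen U) (hne : U.Nonempty) :
    ∃ s : C(X, ℝ), Icc 0 1 ⊆ s '' U := by
  obtain ⟨x, hx⟩ := hne
  obtain ⟨ε, hε, hball⟩ := isOpen_iff.1 hU x hx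
  have hCU : closure (ball x (ε / 2)) ⊆ U :=
    closure_ball_subset_closedBall.trans ((closedBall_subset_ball (half_lt_self hε)).trans hball)
  obtain ⟨f, hfC, hf, hfinj⟩ :=
    (isOpen_ball (x := x) (ε := ε / 2)).perfect_closure.exists_nat_bool_injection
      (nonempty_ball.2 (half_pos hε)).closure
  obtain ⟨s, hs⟩ := ContinuousMap.exists_extension' (hf.isClosedEmbedding hfinj)
    ⟨fun b => (Real.fromBinary b : ℝ), continuous_subtype_val.comp Real.fromBinary_continuous⟩
  refine ⟨s, fun t ht => ?_⟩
  obtain ⟨b, hb⟩ := Real.fromBinary_surjective ⟨t, ht⟩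
  refine ⟨f b, hCU (hfC (mem_range_self b)), ?_⟩
  simpa [hb] using congrFun hs b

section Blocks

variable {X ι : Type*} [MetricSpace X] (c : ι → X) (s : ι × ℕ → C(X, ℝ))

noncomputable def block (j : (ι × ℕ) × ℚ × ℚ) : C(X, ℝ) :=
  bump (c j.1.1) (radius j.1.2) * (ContinuousMap.const X (j.2.1 : ℝ) + (j.2.2 : ℝ) • s j.1)

def blockSums : Set C(X, ℝ) :=
  range fun L : List ((ι × ℕ) × ℚ × ℚ) => (L.map (block c s)).sum

lemma countable_blockSums [Countable ι] : (blockSums c s).Countable :=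
  countable_range _

variable {c}

lemma exists_mem_blockSums_eqOn_balls (hc : DenseRange c) (P : Finset X) {W : X → Set X}
    (hWo : ∀ p, IsOpen (W p)) (hW : ∀ p, p ∈ W p) (a b : X → ℚ) :
    ∃ f ∈ blockSums c s, ∀ p ∈ P, ∃ i : ι × ℕ, p ∈ ball (c i.1) (radius i.2) ∧
      ball (c i.1) (radius i.2) ⊆ W p ∧
      ∀ z ∈ ball (c i.1) (radius i.2), f z = a p + b p * s i z := by
  obtain ⟨i, hi, hdisj⟩ := exists_pairwiseDisjoint_balls hc P hWo hW
  have hsum : ((P.toList.map fun p => (i p, a p, b p)).map (block c s)).sum =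
      ∑ p ∈ P, bump (c (i p).1) (radius (i p).2) *
        (ContinuousMap.const X (a p : ℝ) + (b p : ℝ) • s (i p)) := by
    rw [List.map_map, Finset.sum_map_toList]
    rfl
  refine ⟨_, ⟨P.toList.map fun p => (i p, a p, b p), hsum⟩, fun p hp => ⟨i p, (hi p).1,
    (ball_subset_ball (by linarith [radius_pos (i p).2])).trans (hi p).2, fun z hz => ?_⟩⟩
  rw [sum_bump_mul_apply (fun q => radius_pos (i q).2) hdisj _ hp hz]
  simp

end Blocks

section Reduction

variable {X : Type*} [TopologicalSpace X]

def phSubbasis (X : Type*) [TopologicalSpace X] : Set (Set C(X, ℝ)) :=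
  {S | ∃ (x : X) (U : Set ℝ), IsOpen U ∧ S = {f : C(X, ℝ) | f x ∈ U}} ∪
    {S | ∃ (V : Set X) (r : ℝ), IsOpen V ∧ S = {f : C(X, ℝ) | ∃ x ∈ V, f x = r}}

def phNhd (g : C(X, ℝ)) (T : Finset X) (ε : ℝ) (H : Finset (Set X × ℝ)) : Set C(X, ℝ) :=
  {f | (∀ t ∈ T, |f t - g t| < ε) ∧ ∀ h ∈ H, ∃ y ∈ h.1, f y = h.2}

lemma phNhd_union_subset [DecidableEq X] (g : C(X, ℝ)) (T₁ T₂ : Finset X) (ε₁ ε₂ : ℝ)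
    (H₁ H₂ : Finset (Set X × ℝ)) :
    phNhd g (T₁ ∪ T₂) (min ε₁ ε₂) (H₁ ∪ H₂) ⊆ phNhd g T₁ ε₁ H₁ ∩ phNhd g T₂ ε₂ H₂ := by
  rintro f ⟨hT, hH⟩
  refine ⟨⟨fun t ht => ?_, fun h hh => ?_⟩, ⟨fun t ht => ?_, fun h hh => ?_⟩⟩
  · exact (hT t (Finset.mem_union_left _ ht)).trans_le (min_le_left _ _)
  · exact hH h (Finset.mem_union_left _ hh)
  · exact (hT t (Finset.mem_union_right _ ht)).trans_le (min_le_right _ _)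
  · exact hH h (Finset.mem_union_right _ hh)

lemma exists_phNhd_subset_of_mem_phSubbasis {g : C(X, ℝ)} {S : Set C(X, ℝ)}
    (hS : S ∈ phSubbasis X) (hg : g ∈ S) :
    ∃ T ε H, 0 < ε ∧ (∀ h ∈ H, IsOpen h.1 ∧ h.1.Nonempty) ∧ phNhd g T ε H ⊆ S := by
  rcases hS with ⟨x, U, hU, rfl⟩ | ⟨V, r, hV, rfl⟩
  · obtain ⟨ε, hε, hball⟩ := Metric.isOpen_iff.1 hU (g x) hg
    refine ⟨{x}, ε, ∅, hε, by simp, fun f hf => hball ?_⟩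
    simpa [Real.dist_eq] using hf.1 x (Finset.mem_singleton_self x)
  · obtain ⟨y, hy, -⟩ := hg
    refine ⟨∅, 1, {(V, r)}, one_pos, by simpa using ⟨hV, y, hy⟩, fun f hf => ?_⟩
    exact hf.2 (V, r) (Finset.mem_singleton_self _)

lemma exists_phNhd_subset_sInter {g : C(X, ℝ)} (F : Finset (Set C(X, ℝ)))
    (hF : ↑F ⊆ phSubbasis X) (hg : g ∈ ⋂₀ (F : Set (Set C(X, ℝ)))) :
    ∃ T ε H, 0 < ε ∧ (∀ h ∈ H, IsOpen h.1 ∧ h.1.Nonempty) ∧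
      phNhd g T ε H ⊆ ⋂₀ (F : Set (Set C(X, ℝ))) := by
  classical
  induction F using Finset.induction_on with
  | empty => exact ⟨∅, 1, ∅, one_pos, by simp, by simp⟩
  | insert S F _ ih =>
    rw [Finset.coe_insert, sInter_insert] at hg ⊢
    rw [Finset.coe_insert, insert_subset_iff] at hF
    obtain ⟨T₁, ε₁, H₁, hε₁, hH₁, hsub₁⟩ := exists_phNhd_subset_of_mem_phSubbasis hF.1 hg.1
    obtain ⟨T₂, ε₂, H₂, hε₂, hH₂, hsub₂⟩ := ih hF.2 hg.2
    refine ⟨T₁ ∪ T₂, min ε₁ ε₂, H₁ ∪ H₂, lt_min hε₁ hε₂, ?_, ?_⟩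
    · intro h hh
      rcases Finset.mem_union.1 hh with hh | hh
      exacts [hH₁ h hh, hH₂ h hh]
    · exact (phNhd_union_subset g T₁ T₂ ε₁ ε₂ H₁ H₂).trans (inter_subset_inter hsub₁ hsub₂)

end Reduction

lemma separableSpace_generateFrom {α : Type*} {S : Set (Set α)} {D : Set α} (hD : D.Countable)
    (h : ∀ F : Finset (Set α), ↑F ⊆ S → (⋂₀ (F : Set (Set α))).Nonempty →
      (⋂₀ (F : Set (Set α)) ∩ D).Nonempty) :
    @SeparableSpace α (generateFrom S) := by
  let _ : TopologicalSpace α := generateFrom S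
  refine ⟨⟨D, hD, ?_⟩⟩
  rw [(isTopologicalBasis_of_subbasis rfl).dense_iff]
  rintro _ ⟨F, ⟨hFfin, hFS⟩, rfl⟩ hne
  lift F to Finset (Set α) using hFfin
  exact h F hFS hne

lemma IsOpen.exists_mem_notMem_finset {X : Type*} [TopologicalSpace X] [T1Space X]
    [PerfectSpace X] {U : Set X} (hU : IsOpen U) (hne : U.Nonempty) (T : Finset X) :
    ∃ x ∈ U, x ∉ T :=
  let ⟨x, hxU, hxT⟩ :=
    ((infinite_of_mem_nhds hne.some (hU.mem_nhds hne.some_mem)).sdiff T.finite_toSet).nonempty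
  ⟨x, hxU, hxT⟩

theorem phNhd_inter_blockSums_nonempty {X ι : Type*} [MetricSpace X] [PerfectSpace X]
    {c : ι → X} (hc : DenseRange c) {s : ι × ℕ → C(X, ℝ)}
    (hs : ∀ i, Icc 0 1 ⊆ s i '' ball (c i.1) (radius i.2)) (g : C(X, ℝ)) (T : Finset X)
    {ε : ℝ} (hε : 0 < ε) {H : Finset (Set X × ℝ)} (hH : ∀ h ∈ H, IsOpen h.1 ∧ h.1.Nonempty) :
    (phNhd g T ε H ∩ blockSums c s).Nonempty := by
  classical
  choose q hq using fun t => exists_rat_near (g t) hε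
  obtain ⟨N, hN⟩ : ∃ N : ℕ, ∀ h ∈ H, |h.2| < N := by
    obtain ⟨N, hN⟩ := exists_nat_gt (∑ h ∈ H, |h.2|)
    exact ⟨N, fun h hh =>
      (Finset.single_le_sum (fun h _ => abs_nonneg h.2) hh).trans_lt hN⟩
  choose y hyV hyT using fun h hh =>
    IsOpen.exists_mem_notMem_finset (hH h hh).1 (hH h hh).2 T
  -- `y` need not be injective, so the ball around `y h` has to fit into every hitting set
  -- containing `y h`.
  set W : X → Set X := fun p => ⋂ h ∈ H.filter (fun h => p ∈ h.1), h.1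
  have hWo : ∀ p, IsOpen (W p) := fun p =>
    isOpen_biInter_finset fun h hh => (hH h (Finset.mem_filter.1 hh).1).1
  have hW : ∀ p, p ∈ W p := fun p => mem_iInter₂.2 fun h hh => (Finset.mem_filter.1 hh).2
  -- Near `t ∈ T` the function is the rational constant `q t`; near a hitting point it is
  -- `2N s - N`, whose range on the ball contains `[-N, N]`.
  obtain ⟨f, hfD, hf⟩ := exists_mem_blockSums_eqOn_balls s hc
    (T ∪ H.attach.image fun h => y h.1 h.2) hWo hW
    (fun p => if p ∈ T then q p else -N) (fun p => if p ∈ T then 0 else 2 * N)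
  refine ⟨f, ⟨fun t ht => ?_, fun h hh => ?_⟩, hfD⟩
  · obtain ⟨i, hti, -, hfi⟩ := hf t (Finset.mem_union_left _ ht)
    rw [hfi t hti, abs_sub_comm]
    simpa [ht] using hq t
  · obtain ⟨i, -, hiW, hfi⟩ := hf (y h hh)
      (Finset.mem_union_right _ (Finset.mem_image.2 ⟨⟨h, hh⟩, Finset.mem_attach _ _, rfl⟩))
    have hN0 : (0 : ℝ) < N := (abs_nonneg _).trans_lt (hN h hh)
    obtain ⟨z, hz, hsz⟩ := hs i (show (h.2 + N) / (2 * N) ∈ Icc (0 : ℝ) 1 by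
      have := abs_lt.1 (hN h hh)
      constructor
      · exact div_nonneg (by linarith) (by positivity)
      · rw [div_le_one (by positivity)]; linarith)
    refine ⟨z, iInter₂_subset h (Finset.mem_filter.2 ⟨hh, hyV h hh⟩) (hiW hz), ?_⟩
    rw [hfi z hz, hsz, if_neg (hyT h hh), if_neg (hyT h hh)]
    push_cast
    field_simp
    ring

theorem separableSpace_biPointOpenTopology (X : Type*) [MetricSpace X] [CompleteSpace X]
    [SeparableSpace X] [PerfectSpace X] : @SeparableSpace C(X, ℝ) (biPointOpenTopology X) := by
  obtain ⟨C, hCc, hCd⟩ := exists_countable_dense X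
  have := hCc.to_subtype
  choose s hs using fun i : C × ℕ =>
    exists_continuousMap_Icc_subset_image (isOpen_ball (x := (i.1 : X)))
      (nonempty_ball.2 (radius_pos i.2))
  refine separableSpace_generateFrom (countable_blockSums Subtype.val s) fun F hF ⟨g, hg⟩ => ?_
  obtain ⟨T, ε, H, hε, hH, hsub⟩ := exists_phNhd_subset_sInter F hF hg
  obtain ⟨f, hf, hfD⟩ := phNhd_inter_blockSums_nonempty hCd.denseRange_val hs g T hε hH
  exact ⟨f, hsub hf, hfD⟩

end BiPointOpen

theorem stmt8_general {X : Type*} [TopologicalSpace X] [PolishSpace X] [PerfectSpace X] :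
    @SeparableSpace C(X, ℝ) (biPointOpenTopology X) := by
  let _ := upgradeIsCompletelyMetrizable X
  exact BiPointOpen.separableSpace_biPointOpenTopology X

/-- If `X` is a nonempty perfect Polish space, then `C_ph(X)` is separable. -/
theorem stmt8 {X : Type*} [TopologicalSpace X] [PolishSpace X] [PerfectSpace X] [Nonempty X] :
    @SeparableSpace C(X, ℝ) (biPointOpenTopology X) :=
  stmt8_general
end

section
/- Assume hypothesis (M): every subset of ℝ of cardinality 𝔠 admits a continuous surjection onto the closed interval [0,1]. Then every separable metrizable space M of cardinality 𝔠 admits a continuous function f : M → ℝ such that f(M) contains the closed interval [0,1]. -/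
open TopologicalSpace Set Topology

/-!
By (M) it suffices to find a continuous `f : M → ℝ` whose range has cardinality `𝔠`, and then
compose with a continuous surjection of `range f` onto `[0,1]`. If every continuous real function
on `M` had range of size `< 𝔠`, then each distance function `dist · p` would miss a value in every
interval, so `M` would have clopen balls of arbitrarily small radius around the points of a
countable dense set. These clopen sets separate points, hence code `M` continuously and injectively
into `ℕ → Bool`, i.e. into the Cantor set, and this gives a continuous injection `M → ℝ` with range
of size `#M = 𝔠`, a contradiction.
-/

open Cardinal Metric

lemma exists_mem_Ioo_notMem_range {X : Type*} {f : X → ℝ} (hf : #(range f) < 𝔠) {a b : ℝ}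
    (hab : a < b) : ∃ c ∈ Ioo a b, c ∉ range f := by
  by_contra! h
  exact (mk_le_mk_of_subset h).not_gt (by rwa [mk_Ioo_real hab])

lemma isClopen_ball_of_notMem_range_dist {X : Type*} [PseudoMetricSpace X] {p : X} {r : ℝ}
    (hr : r ∉ range (dist · p)) : IsClopen (ball p r) := by
  refine ⟨?_, isOpen_ball⟩
  convert isClosed_closedBall (x := p) (ε := r) using 1
  ext x
  simp only [mem_ball, mem_closedBall]
  exact ⟨le_of_lt, fun hx => hx.lt_of_ne fun h => hr ⟨x, h⟩⟩

lemma exists_isClopen_ball {X : Type*} [PseudoMetricSpace X]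
    (small : ∀ f : X → ℝ, Continuous f → #(range f) < 𝔠) (p : X) {a b : ℝ} (hab : a < b) :
    ∃ r ∈ Ioo a b, IsClopen (ball p r) := by
  obtain ⟨r, hr, hr'⟩ :=
    exists_mem_Ioo_notMem_range (small _ (continuous_id.dist continuous_const)) hab
  exact ⟨r, hr, isClopen_ball_of_notMem_range_dist hr'⟩

lemma exists_isClopen_separating {X : Type*} [MetricSpace X] [SeparableSpace X]
    (small : ∀ f : X → ℝ, Continuous f → #(range f) < 𝔠) :
    ∃ C : ℕ → Set X, (∀ n, IsClopen (C n)) ∧ ∀ x y, x ≠ y → ∃ n, x ∈ C n ∧ y ∉ C n := by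
  rcases isEmpty_or_nonempty X with hX | hX
  · exact ⟨fun _ => ∅, fun _ => isClopen_empty, fun x => isEmptyElim x⟩
  obtain ⟨u, hu⟩ := exists_dense_seq X
  have : ∀ n k : ℕ, ∃ r ∈ Ioo (1 / (k + 2 : ℝ)) (1 / (k + 1)), IsClopen (ball (u n) r) :=
    fun n k => exists_isClopen_ball small (u n)
      (one_div_lt_one_div_of_lt (by positivity) (by linarith))
  choose r hr hclopen using this
  refine ⟨fun m => ball (u m.unpair.1) (r m.unpair.1 m.unpair.2), fun m => hclopen _ _, ?_⟩
  intro x y hxy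
  obtain ⟨k, hk⟩ := exists_nat_one_div_lt (half_pos (dist_pos.mpr hxy))
  obtain ⟨n, hn⟩ := hu.exists_dist_lt x (show (0 : ℝ) < 1 / (k + 2) by positivity)
  have hxn : dist x (u n) < r n k := hn.trans (hr n k).1
  refine ⟨Nat.pair n k, ?_, ?_⟩ <;> simp only [Nat.unpair_pair, mem_ball]
  · exact hxn
  · have := dist_triangle_right x y (u n)
    linarith [(hr n k).2]

lemma exists_continuous_injective_of_isClopen_separating {X : Type*} [TopologicalSpace X]
    (C : ℕ → Set X) (hC : ∀ n, IsClopen (C n)) (hsep : ∀ x y, x ≠ y → ∃ n, x ∈ C n ∧ y ∉ C n) :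
    ∃ F : X → ℝ, Continuous F ∧ Function.Injective F := by
  let code : X → ℕ → Bool := fun x n => (C n).boolIndicator x
  have hcode : Continuous code :=
    continuous_pi fun n => (continuous_boolIndicator_iff_isClopen _).mpr (hC n)
  have hinj : Function.Injective code := fun x y hxy => by
    by_contra hne
    obtain ⟨n, hx, hy⟩ := hsep x y hne
    have h : (C n).boolIndicator x = (C n).boolIndicator y := congr_fun hxy n
    rw [((C n).mem_iff_boolIndicator x).mp hx, ((C n).notMem_iff_boolIndicator y).mp hy] at h
    exact Bool.noConfusion h
  exact ⟨fun x => (cantorSetHomeomorphNatToBool.symm (code x) : ℝ),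
    continuous_subtype_val.comp (cantorSetHomeomorphNatToBool.symm.continuous.comp hcode),
    Subtype.val_injective.comp (cantorSetHomeomorphNatToBool.symm.injective.comp hinj)⟩

lemma exists_continuous_mk_range_eq_continuum {X : Type*} [TopologicalSpace X]
    [MetrizableSpace X] [SeparableSpace X] (hcard : #X = 𝔠) :
    ∃ f : X → ℝ, Continuous f ∧ #(range f) = 𝔠 := by
  let := metrizableSpaceMetric X
  by_contra! hsmall
  have small : ∀ f : X → ℝ, Continuous f → #(range f) < 𝔠 := fun f hf =>
    (hsmall f hf).lt_of_le ((mk_set_le _).trans_eq mk_real)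
  obtain ⟨C, hC, hsep⟩ := exists_isClopen_separating small
  obtain ⟨F, hF, hFinj⟩ := exists_continuous_injective_of_isClopen_separating C hC hsep
  exact (lift_lt_continuum.mpr (small F hF)).ne
    (by rw [mk_range_eq_of_injective hFinj, hcard, lift_continuum])

/-- Under hypothesis (M), every separable metrizable space of cardinality 𝔠
admits a continuous real-valued map whose image contains `[0,1]`. -/
theorem stmt12 (hM : HypothesisM) {M : Type*} [TopologicalSpace M] [MetrizableSpace M]
    [SeparableSpace M] (hcard : Cardinal.mk M = Cardinal.continuum) :
    ∃ f : M → ℝ, Continuous f ∧ Icc (0 : ℝ) 1 ⊆ Set.range f := by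
  obtain ⟨f, hf, hfc⟩ := exists_continuous_mk_range_eq_continuum hcard
  obtain ⟨g, hg, hgr⟩ := hM (range f) hfc
  refine ⟨g ∘ rangeFactorization f, hg.comp (hf.subtype_mk _), ?_⟩
  rw [rangeFactorization_surjective.range_comp, hgr]
end

section
/- Let X be a separable metrizable space. Then C_ph(X) is separable if and only if X has a countable π-network consisting of 𝓘-sets. -/
/-!
If `C_ph(X)` is separable, fix a dense sequence `(fₙ)`. For a nonempty open `U` and any `r`, the
open set `[U, r]⁻` meets the sequence, so `ℝ = ⋃ₙ fₙ(U)`. A countable union of Marczewski null sets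
misses a point of every Cantor set, so some `fₙ(U)` is not null: there is a Cantor set all of whose
Cantor subsets meet it. Writing that Cantor set as a product of two Cantor sets and extending the
first coordinate followed by a binary expansion to `ℝ` (Tietze) gives a continuous `ψ` with
`[0, 1] ⊆ ψ(fₙ(U))`. So every nonempty open set is an `𝓘`-set, and a countable base is the
π-network.

Conversely, rational translates `q + w_A` of witnesses `w_A` of the `𝓘`-sets `A` of the π-network
attain every real value on every nonempty open set. A basic ph-open set prescribes finitely many
conditions `f x ∈ U` and `∃ y ∈ V, f y = r`; choose distinct fresh centres in the sets `V` (open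
sets are infinite), separate all centres by disjoint neighbourhoods and glue rational constants and
suitable translates with Urysohn bumps taken from a countable family. The resulting finite sums
`∑ uᵢ kᵢ` form a countable dense set.
-/

open TopologicalSpace Set Topology

open Function

section MarczewskiNull

variable {Y : Type*} [TopologicalSpace Y]

def IsCantorSet (K : Set Y) : Prop :=
  ∃ F : (ℕ → Bool) → Y, Continuous F ∧ Injective F ∧ range F = K

/-- Marczewski's `s₀`, with Cantor sets in place of perfect sets (the two agree in Polish
spaces). -/
def IsMarczewskiNull (E : Set Y) : Prop :=
  ∀ K, IsCantorSet K → ∃ K' ⊆ K, IsCantorSet K' ∧ Disjoint K' E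

lemma IsCantorSet.isCompact {K : Set Y} (hK : IsCantorSet K) : IsCompact K := by
  obtain ⟨F, hF, -, rfl⟩ := hK
  exact isCompact_range hF

lemma IsCantorSet.nonempty {K : Set Y} (hK : IsCantorSet K) : K.Nonempty := by
  obtain ⟨F, -, -, rfl⟩ := hK
  exact range_nonempty F

lemma IsCantorSet.exists_notMem_of_isMarczewskiNull [T2Space Y] {K : Set Y} (hK : IsCantorSet K)
    {E : ℕ → Set Y} (hE : ∀ n, IsMarczewskiNull (E n)) : ∃ r ∈ K, ∀ n, r ∉ E n := by
  have step : ∀ n (L : {L : Set Y // IsCantorSet L}),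
      ∃ L' : {L : Set Y // IsCantorSet L}, L'.1 ⊆ L.1 ∧ Disjoint L'.1 (E n) := fun n L =>
    let ⟨L', hL'L, hL', hdisj⟩ := hE n L.1 L.2
    ⟨⟨L', hL'⟩, hL'L, hdisj⟩
  choose next hsub hdisj using step
  let L : ℕ → {L : Set Y // IsCantorSet L} := fun n => Nat.rec ⟨K, hK⟩ next n
  obtain ⟨r, hr⟩ := (L 0).2.isCompact.nonempty_iInter_of_sequence_nonempty_isCompact_isClosed
    (fun n => (L n).1) (fun n => hsub n (L n)) (fun n => (L n).2.nonempty)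
    (fun n => (L n).2.isCompact.isClosed)
  exact ⟨r, mem_iInter.1 hr 0,
    fun n => (hdisj n (L n)).notMem_of_mem_left (mem_iInter.1 hr (n + 1))⟩

lemma exists_Icc_subset_image_of_not_isMarczewskiNull [NormalSpace Y] [T2Space Y] {E : Set Y}
    (hE : ¬ IsMarczewskiNull E) : ∃ ψ : C(Y, ℝ), Icc 0 1 ⊆ ψ '' E := by
  simp only [IsMarczewskiNull, not_forall, not_exists, not_and, not_disjoint_iff] at hE
  obtain ⟨_, ⟨F, hFc, hFi, rfl⟩, hmeet⟩ := hE
  let Φ : (ℕ → Bool) × (ℕ → Bool) ≃ₜ (ℕ → Bool) :=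
    Homeomorph.sumArrowHomeomorphProdArrow.symm.trans
      (Homeomorph.piCongrLeft (Y := fun _ => Bool) Equiv.natSumNatEquivNat)
  let ψ₀ : C(ℕ → Bool, ℝ) := ⟨fun x => Real.fromBinary (Φ.symm x).1,
    continuous_subtype_val.comp (Real.fromBinary_continuous.comp (by fun_prop))⟩
  obtain ⟨ψ, hψ⟩ := ψ₀.exists_extension' (hFc.isClosedEmbedding hFi)
  refine ⟨ψ, fun t ht => ?_⟩
  obtain ⟨e, he⟩ := Real.fromBinary_surjective ⟨t, ht⟩
  have hsub : IsCantorSet (range fun z => F (Φ (e, z))) :=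
    ⟨_, by fun_prop, hFi.comp (Φ.injective.comp (Prod.mk_right_injective e)), rfl⟩
  obtain ⟨_, ⟨z, rfl⟩, hz⟩ := hmeet _ (range_subset_iff.2 fun z => mem_range_self _) hsub
  refine ⟨_, hz, ?_⟩
  have hψz := congrFun hψ (Φ (e, z))
  simp only [comp_apply] at hψz
  simp [hψz, ψ₀, he]

end MarczewskiNull

lemma isCantorSet_cantorSet : IsCantorSet cantorSet :=
  ⟨fun x => cantorSetHomeomorphNatToBool.symm x, by fun_prop,
    Subtype.val_injective.comp cantorSetHomeomorphNatToBool.symm.injective, by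
      rw [range_comp', cantorSetHomeomorphNatToBool.symm.range_coe, image_univ, Subtype.range_coe]⟩

section Necessity

variable {X : Type*} [TopologicalSpace X]

lemma isISet_of_forall_exists_mem_image {U : Set X} (f : ℕ → C(X, ℝ))
    (hf : ∀ r, ∃ n, r ∈ f n '' U) : IsISet U := by
  by_cases hnull : ∀ n, IsMarczewskiNull (f n '' U)
  · obtain ⟨r, -, hr⟩ := isCantorSet_cantorSet.exists_notMem_of_isMarczewskiNull hnull
    obtain ⟨n, hn⟩ := hf r
    exact absurd hn (hr n)
  · push Not at hnull
    obtain ⟨n, hn⟩ := hnull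
    obtain ⟨ψ, hψ⟩ := exists_Icc_subset_image_of_not_isMarczewskiNull hn
    exact ⟨ψ ∘ f n, 0, 1, by fun_prop, one_pos, by rwa [image_comp]⟩

lemma isISet_of_separableSpace_biPointOpen (hsep : @SeparableSpace C(X, ℝ) (biPointOpenTopology X))
    {U : Set X} (hU : IsOpen U) (hne : U.Nonempty) : IsISet U := by
  let := biPointOpenTopology X
  obtain ⟨f, hf⟩ := exists_dense_seq C(X, ℝ)
  refine isISet_of_forall_exists_mem_image f fun r => ?_
  have hopen : IsOpen {g : C(X, ℝ) | ∃ x ∈ U, g x = r} :=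
    isOpen_generateFrom_of_mem (Or.inr ⟨U, r, hU, rfl⟩)
  obtain ⟨n, x, hx, hfx⟩ :=
    hf.exists_mem_open hopen ⟨ContinuousMap.const X r, hne.some, hne.some_mem, rfl⟩
  exact ⟨n, x, hx, hfx⟩

lemma exists_countable_isPiNetwork_of_separableSpace_biPointOpen [SecondCountableTopology X]
    (hsep : @SeparableSpace C(X, ℝ) (biPointOpenTopology X)) :
    ∃ γ : Set (Set X), γ.Countable ∧ IsPiNetwork γ ∧ ∀ A ∈ γ, IsISet A := by
  obtain ⟨b, hbc, hbempty, hb⟩ := exists_countable_basis X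
  have hbne : ∀ B ∈ b, B.Nonempty := fun B hB => nonempty_iff_ne_empty.2 fun h => hbempty (h ▸ hB)
  refine ⟨b, hbc, ⟨hbne, fun U hU ⟨x, hx⟩ => ?_⟩, fun B hB =>
    isISet_of_separableSpace_biPointOpen hsep (hb.isOpen hB) (hbne B hB)⟩
  obtain ⟨B, hB, -, hBU⟩ := hb.exists_subset_of_mem_open hx hU
  exact ⟨B, hB, hBU⟩

end Necessity

section BasicSets

variable {X : Type*} [TopologicalSpace X]

def biPointOpenBasicSet (P : Finset (X × Set ℝ)) (H : Finset (Set X × ℝ)) : Set C(X, ℝ) :=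
  {f | (∀ p ∈ P, f p.1 ∈ p.2) ∧ ∀ q ∈ H, ∃ y ∈ q.1, f y = q.2}

lemma exists_sInter_eq_biPointOpenBasicSet {F : Set (Set C(X, ℝ))} (hF : F.Finite)
    (hFsub : F ⊆ {S | ∃ (x : X) (U : Set ℝ), IsOpen U ∧ S = {f : C(X, ℝ) | f x ∈ U}} ∪
      {S | ∃ (V : Set X) (r : ℝ), IsOpen V ∧ S = {f : C(X, ℝ) | ∃ x ∈ V, f x = r}}) :
    ∃ P H, (∀ p ∈ P, IsOpen p.2) ∧ (∀ q ∈ H, IsOpen q.1) ∧ ⋂₀ F = biPointOpenBasicSet P H := by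
  classical
  induction F, hF using Set.Finite.induction_on with
  | empty => exact ⟨∅, ∅, by simp, by simp, by ext; simp [biPointOpenBasicSet]⟩
  | @insert S F _ _ ih =>
    obtain ⟨P, H, hP, hH, hPH⟩ := ih ((subset_insert S F).trans hFsub)
    rw [sInter_insert, hPH]
    rcases hFsub (mem_insert S F) with ⟨x, U, hU, rfl⟩ | ⟨V, r, hV, rfl⟩
    · refine ⟨insert (x, U) P, H, by simpa [hU] using hP, hH, ?_⟩
      ext; simp [biPointOpenBasicSet, and_assoc]
    · refine ⟨P, insert (V, r) H, hP, by simpa [hV] using hH, ?_⟩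
      ext; simp [biPointOpenBasicSet, and_left_comm]

lemma dense_biPointOpen_of_forall {T : Set C(X, ℝ)}
    (hT : ∀ P H, (∀ p ∈ P, IsOpen p.2) → (∀ q ∈ H, IsOpen q.1) →
      (biPointOpenBasicSet P H).Nonempty → (T ∩ biPointOpenBasicSet P H).Nonempty) :
    @Dense _ (biPointOpenTopology X) T := by
  let := biPointOpenTopology X
  refine (isTopologicalBasis_of_subbasis rfl).dense_iff.2 ?_
  rintro _ ⟨F, ⟨hF, hFsub⟩, rfl⟩ hne
  obtain ⟨P, H, hP, hH, hPH⟩ := exists_sInter_eq_biPointOpenBasicSet hF hFsub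
  dsimp only at hne ⊢
  rw [hPH] at hne ⊢
  rw [inter_comm]
  exact hT P H hP hH hne

end BasicSets

section Bumps

variable {X : Type*} [TopologicalSpace X]

def IsBumpFamily (𝓤 : Set C(X, ℝ)) : Prop :=
  ∀ x O, IsOpen O → x ∈ O → ∃ N, IsOpen N ∧ x ∈ N ∧ ∃ u ∈ 𝓤, EqOn u 1 N ∧ EqOn u 0 Oᶜ

def bumpSums (𝓤 K : Set C(X, ℝ)) : Set C(X, ℝ) :=
  {g | ∃ s : Finset (C(X, ℝ) × C(X, ℝ)), ↑s ⊆ 𝓤 ×ˢ K ∧ ∑ p ∈ s, p.1 * p.2 = g}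

lemma countable_bumpSums {𝓤 K : Set C(X, ℝ)} (h𝓤 : 𝓤.Countable) (hK : K.Countable) :
    (bumpSums 𝓤 K).Countable := by
  have hfin : {s : Finset (C(X, ℝ) × C(X, ℝ)) | ↑s ⊆ 𝓤 ×ˢ K}.Countable :=
    ((countable_ofPred_finite_subset (h𝓤.prod hK)).preimage Finset.coe_injective).mono
      fun s hs => by exact ⟨s.finite_toSet, hs⟩
  refine (hfin.image fun s => ∑ p ∈ s, p.1 * p.2).mono ?_
  rintro g ⟨s, hs, rfl⟩
  exact mem_image_of_mem _ hs

lemma exists_countable_isBumpFamily [RegularSpace X] [SecondCountableTopology X] :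
    ∃ 𝓤 : Set C(X, ℝ), 𝓤.Countable ∧ IsBumpFamily 𝓤 := by
  obtain ⟨b, hbc, -, hb⟩ := exists_countable_basis X
  let s : Set (Set X × Set X) := {p | p.1 ∈ b ∧ p.2 ∈ b ∧ closure p.1 ⊆ p.2}
  have : ∀ p : s, ∃ u : C(X, ℝ), EqOn u 1 p.1.1 ∧ EqOn u 0 p.1.2ᶜ := by
    rintro ⟨⟨B, B'⟩, -, hB', hBB'⟩
    obtain ⟨u, hu0, hu1, -⟩ := exists_continuous_zero_one_of_isClosed
      (hb.isOpen hB').isClosed_compl isClosed_closure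
      (disjoint_compl_left_iff_subset.2 hBB')
    exact ⟨u, hu1.mono subset_closure, hu0⟩
  choose u hu1 hu0 using this
  have : Countable s :=
    ((hbc.prod hbc).mono fun p hp => (⟨hp.1, hp.2.1⟩ : p.1 ∈ b ∧ p.2 ∈ b)).to_subtype
  refine ⟨range u, countable_range u, fun x O hO hx => ?_⟩
  obtain ⟨B', hB', hxB', hB'O⟩ := hb.exists_subset_of_mem_open hx hO
  obtain ⟨B, hB, hxB, hBB'⟩ := hb.exists_closure_subset (hb.mem_nhds hB' hxB')
  let p : s := ⟨(B, B'), hB, hB', hBB'⟩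
  exact ⟨B, hb.isOpen hB, hxB, u p, mem_range_self p, hu1 p,
    (hu0 p).mono (compl_subset_compl.2 hB'O)⟩

lemma IsBumpFamily.exists_eqOn_bumpSums [T2Space X] {𝓤 : Set C(X, ℝ)} (h𝓤 : IsBumpFamily 𝓤)
    (K : Set C(X, ℝ)) {ι : Type*} [Fintype ι] {c : ι → X} (hc : Injective c) {W : ι → Set X}
    (hW : ∀ i, IsOpen (W i)) (hcW : ∀ i, c i ∈ W i) :
    ∃ N : ι → Set X, (∀ i, IsOpen (N i) ∧ c i ∈ N i ∧ N i ⊆ W i) ∧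
      ∀ k : ι → C(X, ℝ), (∀ i, k i ∈ K) → ∃ g ∈ bumpSums 𝓤 K, ∀ i, EqOn g (k i) (N i) := by
  classical
  obtain ⟨O, hO, hdisj⟩ := (finite_range c).t2_separation
  choose N hN hcN u hu𝓤 hu1 hu0 using fun i =>
    h𝓤 (c i) (O (c i) ∩ W i) ((hO _).2.inter (hW i)) ⟨(hO _).1, hcW i⟩
  have hNO : ∀ i, N i ⊆ O (c i) ∩ W i := fun i y hy => by
    by_contra hyO
    simpa [hu1 i hy] using hu0 i hyO
  refine ⟨N, fun i => ⟨hN i, hcN i, (hNO i).trans inter_subset_right⟩, fun k hk => ?_⟩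
  refine ⟨_, ⟨Finset.univ.image fun i => (u i, k i), ?_, rfl⟩, fun i y hy => ?_⟩
  · simp only [Finset.coe_image, Finset.coe_univ, image_univ]
    exact range_subset_iff.2 fun i => ⟨hu𝓤 i, hk i⟩
  · rw [ContinuousMap.sum_apply, Finset.sum_eq_single_of_mem (u i, k i)
      (Finset.mem_image_of_mem (fun i => (u i, k i)) (Finset.mem_univ i))]
    · simp [hu1 i hy]
    · simp only [Finset.mem_image, Finset.mem_univ, true_and]
      rintro _ ⟨j, rfl⟩ hji
      have hcji : c j ≠ c i := fun h => hji (by rw [hc h])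
      have hyj : y ∉ O (c j) ∩ W j := fun hyj =>
        (hdisj (mem_range_self j) (mem_range_self i) hcji).notMem_of_mem_left hyj.1 (hNO i hy).1
      simp [hu0 j hyj]

end Bumps

lemma exists_injective_forall_mem_of_infinite {ι Y : Type*} [Fintype ι] {W : ι → Set Y}
    (hW : ∀ i, (W i).Infinite) : ∃ z : ι → Y, Injective z ∧ ∀ i, z i ∈ W i := by
  classical
  choose t ht hcard using fun i => (hW i).exists_subset_card_eq (Fintype.card ι)
  obtain ⟨z, hz, hzt⟩ := (Finset.all_card_le_biUnion_card_iff_exists_injective t).1 fun s => by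
    rcases s.eq_empty_or_nonempty with rfl | ⟨i, hi⟩
    · simp
    · calc s.card ≤ Fintype.card ι := s.card_le_univ
        _ = (t i).card := (hcard i).symm
        _ ≤ (s.biUnion t).card := Finset.card_le_card (Finset.subset_biUnion_of_mem t hi)
  exact ⟨z, hz, fun i => ht i (hzt i)⟩

section Sufficiency

variable {X : Type*} [TopologicalSpace X]

lemma IsISet.infinite {A : Set X} (hA : IsISet A) : A.Infinite := by
  obtain ⟨f, a, b, -, hab, hsub⟩ := hA
  exact fun hfin => Icc_infinite hab ((hfin.image f).subset hsub)

lemma exists_countable_forall_mem_image_of_isPiNetwork {γ : Set (Set X)} (hγc : γ.Countable)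
    (hγ : IsPiNetwork γ) (hI : ∀ A ∈ γ, IsISet A) :
    ∃ K : Set C(X, ℝ), K.Countable ∧ (∀ q : ℚ, ContinuousMap.const X (q : ℝ) ∈ K) ∧
      ∀ V, IsOpen V → V.Nonempty → ∀ r, ∃ k ∈ K, r ∈ k '' V := by
  have hI' : ∀ A ∈ γ, ∃ w : C(X, ℝ), ∃ a b, a < b ∧ Icc a b ⊆ w '' A := fun A hA =>
    let ⟨w, a, b, hw, hab, hsub⟩ := hI A hA
    ⟨⟨w, hw⟩, a, b, hab, hsub⟩
  choose! w a b hab hsub using hI'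
  refine ⟨image2 (fun (q : ℚ) v => ContinuousMap.const X (q : ℝ) + v) univ (insert 0 (w '' γ)),
    countable_univ.image2 ((hγc.image w).insert 0) _,
    fun q => ⟨q, trivial, 0, mem_insert 0 _, add_zero _⟩, fun V hV hne r => ?_⟩
  obtain ⟨A, hA, hAV⟩ := hγ.2 V hV hne
  obtain ⟨q, hq₁, hq₂⟩ := exists_rat_btwn (sub_lt_sub_left (hab A hA) r)
  obtain ⟨y, hy, hwy⟩ := hsub A hA (show r - q ∈ Icc (a A) (b A) from ⟨by linarith, by linarith⟩)
  refine ⟨_, ⟨q, trivial, w A, mem_insert_of_mem 0 (mem_image_of_mem w hA), rfl⟩, y, hAV hy, ?_⟩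
  simp [hwy]

lemma exists_mem_bumpSums_inter_biPointOpenBasicSet [T2Space X] {𝓤 K : Set C(X, ℝ)}
    (h𝓤 : IsBumpFamily 𝓤) (hconst : ∀ q : ℚ, ContinuousMap.const X (q : ℝ) ∈ K)
    (hK : ∀ V, IsOpen V → V.Nonempty → ∀ r, ∃ k ∈ K, r ∈ k '' V)
    (hinf : ∀ V : Set X, IsOpen V → V.Nonempty → V.Infinite)
    {P : Finset (X × Set ℝ)} {H : Finset (Set X × ℝ)} (hP : ∀ p ∈ P, IsOpen p.2)
    (hH : ∀ q ∈ H, IsOpen q.1) (hne : (biPointOpenBasicSet P H).Nonempty) :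
    (bumpSums 𝓤 K ∩ biPointOpenBasicSet P H).Nonempty := by
  classical
  obtain ⟨h, hPh, hHh⟩ := hne
  let pts := P.image Prod.fst
  obtain ⟨z, hzinj, hz⟩ := exists_injective_forall_mem_of_infinite (W := fun q : H => q.1.1 \ pts)
    fun q => (hinf _ (hH q q.2) ((hHh q q.2).imp fun _ hy => hy.1)).sdiff pts.finite_toSet
  have hc : Injective (Sum.elim ((↑) : pts → X) z) :=
    Subtype.val_injective.sumElim hzinj fun x q hxq => (hz q).2 (hxq ▸ x.2)
  obtain ⟨N, hN, hpatch⟩ := h𝓤.exists_eqOn_bumpSums K hc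
    (W := Sum.elim (fun _ => univ) fun q => q.1.1)
    (by rintro (_ | q); exacts [isOpen_univ, hH q q.2])
    (by rintro (_ | q); exacts [trivial, (hz q).1])
  have ht : ∀ x : pts, ∃ t : ℚ, (t : ℝ) ∈ ⋂ p ∈ P.filter (fun p => p.1 = x.1), p.2 := fun x =>
    Rat.denseRange_cast.exists_mem_open
      (isOpen_biInter_finset fun p hp => hP p (Finset.mem_filter.1 hp).1)
      ⟨h x, mem_iInter₂.2 fun p hp => (Finset.mem_filter.1 hp).2 ▸ hPh p (Finset.mem_filter.1 hp).1⟩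
  choose t ht using ht
  choose k hkK hk using fun q : H => hK _ (hN (.inr q)).1 ⟨_, (hN (.inr q)).2.1⟩ q.1.2
  obtain ⟨g, hg, hgN⟩ := hpatch (Sum.elim (fun x => ContinuousMap.const X (t x : ℝ)) k)
    (by rintro (x | q); exacts [hconst _, hkK q])
  refine ⟨g, hg, fun p hp => ?_, fun q hq => ?_⟩
  · let x : pts := ⟨p.1, Finset.mem_image_of_mem _ hp⟩
    have hgx : g p.1 = t x := hgN (.inl x) (hN (.inl x)).2.1
    rw [hgx]
    exact mem_iInter₂.1 (ht x) p (Finset.mem_filter.2 ⟨hp, rfl⟩)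
  · obtain ⟨y, hy, hky⟩ := hk ⟨q, hq⟩
    exact ⟨y, (hN (.inr ⟨q, hq⟩)).2.2 hy, (hgN (.inr ⟨q, hq⟩) hy).trans hky⟩

lemma separableSpace_biPointOpen_of_isPiNetwork [T3Space X] [SecondCountableTopology X]
    {γ : Set (Set X)} (hγc : γ.Countable) (hγ : IsPiNetwork γ) (hI : ∀ A ∈ γ, IsISet A) :
    @SeparableSpace C(X, ℝ) (biPointOpenTopology X) := by
  obtain ⟨𝓤, h𝓤c, h𝓤⟩ := exists_countable_isBumpFamily (X := X)
  obtain ⟨K, hKc, hconst, hK⟩ := exists_countable_forall_mem_image_of_isPiNetwork hγc hγ hI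
  have hinf : ∀ V : Set X, IsOpen V → V.Nonempty → V.Infinite := fun V hV hne =>
    let ⟨A, hA, hAV⟩ := hγ.2 V hV hne
    (hI A hA).infinite.mono hAV
  exact @SeparableSpace.mk _ (biPointOpenTopology X) ⟨bumpSums 𝓤 K, countable_bumpSums h𝓤c hKc,
    dense_biPointOpen_of_forall fun _ _ hP hH =>
      exists_mem_bumpSums_inter_biPointOpenBasicSet h𝓤 hconst hK hinf hP hH⟩

end Sufficiency

/-- For a separable metrizable space `X`, `C_ph(X)` is separable iff `X` has
a countable π-network consisting of 𝓘-sets. -/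
theorem stmt15 {X : Type*} [TopologicalSpace X] [MetrizableSpace X] [SeparableSpace X] :
    @SeparableSpace C(X, ℝ) (biPointOpenTopology X) ↔
      ∃ γ : Set (Set X), γ.Countable ∧ IsPiNetwork γ ∧ ∀ A ∈ γ, IsISet A := by
  have : SecondCountableTopology X := by
    let := metrizableSpaceMetric X
    exact UniformSpace.secondCountable_of_separable X
  exact ⟨exists_countable_isPiNetwork_of_separableSpace_biPointOpen,
    fun ⟨_, hγc, hγ, hI⟩ => separableSpace_biPointOpen_of_isPiNetwork hγc hγ hI⟩
end

section
/- The space C_h(ℙ), where ℙ is the space of irrational numbers with the subspace topology from ℝ, is separable. -/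
open TopologicalSpace Set Topology

/-! `stretch y = y / (1 - |y|)` maps `(-1, 1)` onto `ℝ` and `ℚ` into `ℚ`, so it takes every
irrational value at an irrational point. Gluing it on `(0, 1/2)` to a copy shifted by `√2` on
`(1/2, 1)` gives `doubleStretch`, continuous at irrationals and taking every real value at an
irrational point of `(0, 1)`. Precomposed with `x ↦ fract (2 ^ N * x)` it becomes a function
`f_N ∈ C(ℙ, ℝ)` taking every value on every dyadic interval of length `2⁻ᴺ`. A nonempty basic
open set `⋂ [V_i, r_i]⁻` of `C_h(ℙ)` contains `f_N` as soon as each `V_i` contains such an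
interval (within `ℙ`), so `{f_N}` is dense. -/

open Filter

noncomputable def stretch (y : ℝ) : ℝ := y / (1 - |y|)

lemma stretch_div_one_add_abs (r : ℝ) : stretch (r / (1 + |r|)) = r := by
  have h : 0 < 1 + |r| := by positivity
  have h' : 1 - |r / (1 + |r|)| = 1 / (1 + |r|) := by
    rw [abs_div, abs_of_pos h]; field_simp; ring
  rw [stretch, h', div_div_div_cancel_right₀ h.ne', div_one]

lemma Irrational.of_stretch {y : ℝ} (h : Irrational (stretch y)) : Irrational y := by
  rintro ⟨q, rfl⟩
  exact h ⟨q / (1 - |q|), by push_cast [stretch]; rfl⟩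

lemma continuousAt_stretch {y : ℝ} (hy : Irrational y) : ContinuousAt stretch y := by
  refine continuousAt_id.div (continuousAt_const.sub continuous_abs.continuousAt) ?_
  rw [sub_ne_zero, ne_comm, Ne, abs_eq zero_le_one]
  rintro (h | h)
  · exact hy.ne_one h
  · exact hy.ne_int (-1) (by simpa using h)

lemma exists_irrational_stretch_eq {r : ℝ} (hr : Irrational r) :
    ∃ y ∈ Ioo (-1 : ℝ) 1, Irrational y ∧ stretch y = r := by
  have h : 0 < 1 + |r| := by positivity
  refine ⟨r / (1 + |r|), ?_, (stretch_div_one_add_abs r ▸ hr).of_stretch,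
    stretch_div_one_add_abs r⟩
  rw [mem_Ioo, lt_div_iff₀ h, div_lt_iff₀ h]
  constructor <;> cases abs_cases r <;> linarith

noncomputable def doubleStretch (t : ℝ) : ℝ :=
  if t < 1 / 2 then stretch (4 * t - 1) else stretch (4 * t - 3) + √2

lemma exists_irrational_doubleStretch_eq (r : ℝ) :
    ∃ t ∈ Ioo (0 : ℝ) 1, Irrational t ∧ doubleStretch t = r := by
  by_cases hr : Irrational r
  · obtain ⟨y, ⟨hy₁, hy₂⟩, hy, rfl⟩ := exists_irrational_stretch_eq hr
    refine ⟨(y + 1) / 4, ⟨by linarith, by linarith⟩,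
      by exact_mod_cast (hy.add_natCast 1).div_natCast four_ne_zero, ?_⟩
    rw [doubleStretch, if_pos (by linarith), show 4 * ((y + 1) / 4) - 1 = y by ring]
  · obtain ⟨q, rfl⟩ := not_not.1 hr
    obtain ⟨y, ⟨hy₁, hy₂⟩, hy, hyq⟩ :=
      exists_irrational_stretch_eq (irrational_sqrt_two.ratCast_sub q)
    refine ⟨(y + 3) / 4, ⟨by linarith, by linarith⟩,
      by exact_mod_cast (hy.add_natCast 3).div_natCast four_ne_zero, ?_⟩
    rw [doubleStretch, if_neg (by linarith), show 4 * ((y + 3) / 4) - 3 = y by ring, hyq,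
      sub_add_cancel]

lemma continuousAt_doubleStretch {t : ℝ} (ht : Irrational t) : ContinuousAt doubleStretch t := by
  rcases lt_or_gt_of_ne (show t ≠ 1 / 2 by simpa using ht.ne_rat (1 / 2)) with h | h
  · refine ((continuousAt_stretch ?_).comp (f := fun s => 4 * s - 1) (by fun_prop)).congr ?_
    · exact_mod_cast (ht.natCast_mul four_ne_zero).sub_intCast 1
    · filter_upwards [eventually_lt_nhds h] with s hs
      rw [doubleStretch, if_pos hs, Function.comp_apply]
  · refine (((continuousAt_stretch ?_).comp (f := fun s => 4 * s - 3) (by fun_prop)).add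
      (continuousAt_const (y := √2))).congr ?_
    · exact_mod_cast (ht.natCast_mul four_ne_zero).sub_intCast 3
    · filter_upwards [eventually_gt_nhds h] with s hs
      rw [doubleStretch, if_neg (not_lt.2 hs.le)]
      rfl

lemma Irrational.two_pow_mul {x : ℝ} (hx : Irrational x) (N : ℕ) : Irrational (2 ^ N * x) := by
  exact_mod_cast hx.natCast_mul (pow_ne_zero N two_ne_zero)

noncomputable def dyadicStretch (N : ℕ) : C({x : ℝ // Irrational x}, ℝ) where
  toFun x := doubleStretch (Int.fract (2 ^ N * x))
  continuous_toFun := continuous_iff_continuousAt.2 fun x => by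
    have hx : Irrational (2 ^ N * (x : ℝ)) := x.2.two_pow_mul N
    have hfract : Irrational (Int.fract (2 ^ N * (x : ℝ))) := hx.sub_intCast _
    exact (continuousAt_doubleStretch hfract).comp
      (f := fun x : {x : ℝ // Irrational x} => Int.fract (2 ^ N * (x : ℝ)))
      ((continuousAt_fract (hx.ne_int _)).comp
        (f := fun x : {x : ℝ // Irrational x} => 2 ^ N * (x : ℝ)) (by fun_prop))

theorem denseRange_openPointTopology_of_eventually {X ι : Type*} [TopologicalSpace X]
    {l : Filter ι} [l.NeBot] (F : ι → C(X, ℝ))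
    (hF : ∀ V : Set X, IsOpen V → V.Nonempty → ∀ r : ℝ,
      ∀ᶠ i in l, ∃ x ∈ V, F i x = r) :
    @DenseRange _ (openPointTopology X) _ F := by
  let := openPointTopology X
  rw [DenseRange, (isTopologicalBasis_of_subbasis (t := openPointTopology X) rfl).dense_iff]
  rintro _ ⟨S, ⟨hSfin, hSsub⟩, rfl⟩ ⟨g, hg⟩
  have hS : ∀ o ∈ S, ∀ᶠ i in l, F i ∈ o := by
    intro o ho
    obtain ⟨V, r, hV, rfl⟩ := hSsub ho
    obtain ⟨x, hxV, -⟩ := mem_sInter.1 hg _ ho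
    exact hF V hV ⟨x, hxV⟩ r
  obtain ⟨i, hi⟩ := ((eventually_all_finite hSfin).2 hS).exists
  exact ⟨F i, mem_sInter.2 hi, i, rfl⟩

lemma eventually_exists_dyadicStretch_eq {V : Set {x : ℝ // Irrational x}} (hV : IsOpen V)
    (hne : V.Nonempty) (r : ℝ) : ∀ᶠ N in atTop, ∃ y ∈ V, dyadicStretch N y = r := by
  obtain ⟨x, hx⟩ := hne
  obtain ⟨ε, hε, hball⟩ := Metric.isOpen_iff.1 hV x hx
  obtain ⟨t, ⟨ht₀, ht₁⟩, ht, rfl⟩ := exists_irrational_doubleStretch_eq r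
  have hsmall : ∀ᶠ N : ℕ in atTop, ((2 : ℝ) ^ N)⁻¹ < ε :=
    (tendsto_inv_atTop_zero.comp (tendsto_pow_atTop_atTop_of_one_lt one_lt_two)).eventually
      (gt_mem_nhds hε)
  filter_upwards [hsmall] with N hN
  have hpos : (0 : ℝ) < 2 ^ N := by positivity
  set m := ⌊2 ^ N * (x : ℝ)⌋
  have hscale : 2 ^ N * ((m + t) / 2 ^ N) = m + t := mul_div_cancel₀ _ hpos.ne'
  have hft : Int.fract t = t := Int.fract_eq_self.2 ⟨ht₀.le, ht₁⟩
  have hirr : Irrational ((m + t) / 2 ^ N) := by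
    exact_mod_cast (ht.intCast_add m).div_natCast (pow_ne_zero N two_ne_zero)
  refine ⟨⟨(m + t) / 2 ^ N, hirr⟩, hball ?_, ?_⟩
  · have hfloor : ⌊2 ^ N * ((m + t) / 2 ^ N)⌋ = m := by
      rw [hscale, Int.floor_intCast_add, Int.floor_eq_zero_iff.2 ⟨ht₀.le, ht₁⟩, add_zero]
    have h1 := Int.abs_sub_lt_one_of_floor_eq_floor hfloor
    rw [← mul_sub, abs_mul, abs_of_pos hpos, ← lt_inv_mul_iff₀ hpos, mul_one] at h1
    exact h1.trans hN
  · show doubleStretch (Int.fract (2 ^ N * ((m + t) / 2 ^ N))) = doubleStretch t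
    rw [hscale, Int.fract_intCast_add, hft]

/-- `C_h(ℙ)` is separable, where `ℙ` is the space of irrational numbers. -/
theorem stmt18 :
    @SeparableSpace C({x : ℝ // Irrational x}, ℝ)
      (openPointTopology {x : ℝ // Irrational x}) :=
  @SeparableSpace.of_denseRange _ (openPointTopology _) _ _ dyadicStretch <|
    denseRange_openPointTopology_of_eventually (l := atTop) dyadicStretch fun _ hV hne r =>
      eventually_exists_dyadicStretch_eq hV hne r
end

section
/- Let X be a topological space. If C_h(X) is separable, then X has a π-network consisting of 𝓘-sets. -/
open TopologicalSpace Set Topology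

/-!
Every nonempty open set `U` is an 𝓘-set. A dense sequence `(f n)` of `C_h(X)` meets each subbasic
set `[U, r]⁻`, so the `f n` jointly attain every real value on `U`. Embed `(2^ℕ)^ℕ` in `ℝ` as a
closed set; a diagonal argument gives one `n` such that `f n '' U` contains points of this copy
with every prescribed `n`-th coordinate. A continuous surjection `2^ℕ → [0, 1]` applied to that
coordinate, extended to `ℝ` by Tietze, then maps `f n '' U` onto `[0, 1]`.
-/

theorem exists_eval_image_eq_univ_of_iUnion_eq_univ {ι K : Type*} {T : ι → Set (ι → K)}
    (hT : ⋃ i, T i = univ) : ∃ i, Function.eval i '' T i = univ := by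
  by_contra! h
  choose τ hτ using fun i => (ne_univ_iff_exists_notMem _).1 (h i)
  obtain ⟨i, hi⟩ := mem_iUnion.1 (hT ▸ mem_univ τ)
  exact hτ i ⟨τ, hi, rfl⟩

theorem exists_isClosedEmbedding_nat_nat_bool_real :
    ∃ e : (ℕ → ℕ → Bool) → ℝ, IsClosedEmbedding e := by
  let h : (ℕ → ℕ → Bool) ≃ₜ cantorSet :=
    cantorSpaceHomeomorphNatToCantorSpace.symm.trans cantorSetHomeomorphNatToBool.symm
  exact ⟨Subtype.val ∘ h, isClosed_cantorSet.isClosedEmbedding_subtypeVal.comp h.isClosedEmbedding⟩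

theorem isISet_of_forall_mem_image {X : Type*} [TopologicalSpace X] {U : Set X}
    (f : ℕ → C(X, ℝ)) (hf : ∀ r : ℝ, ∃ n, r ∈ f n '' U) : IsISet U := by
  obtain ⟨e, he⟩ := exists_isClosedEmbedding_nat_nat_bool_real
  obtain ⟨n, hn⟩ := exists_eval_image_eq_univ_of_iUnion_eq_univ
    (T := fun n => e ⁻¹' (f n '' U)) (eq_univ_of_forall fun σ => mem_iUnion.2 (hf (e σ)))
  obtain ⟨g, hg, hg_surj⟩ := exists_nat_bool_continuous_surjective_of_compact (Icc (0 : ℝ) 1)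
  obtain ⟨Φ, hΦ⟩ := ContinuousMap.exists_extension' he
    ⟨fun σ => (g (σ n) : ℝ), continuous_subtype_val.comp (hg.comp (continuous_apply n))⟩
  refine ⟨Φ ∘ f n, 0, 1, Φ.continuous.comp (f n).continuous, one_pos, fun y hy => ?_⟩
  obtain ⟨k, hk⟩ := hg_surj ⟨y, hy⟩
  obtain ⟨σ, ⟨x, hxU, hx⟩, rfl⟩ := hn.symm ▸ mem_univ k
  refine ⟨x, hxU, ?_⟩
  show Φ (f n x) = y
  rw [hx, ← Function.comp_apply (f := Φ), hΦ]
  exact congrArg Subtype.val hk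

theorem exists_mem_image_of_denseRange_openPointTopology {X ι : Type*} [TopologicalSpace X]
    {u : ι → C(X, ℝ)} (hu : @DenseRange _ (openPointTopology X) _ u) {U : Set X}
    (hU : IsOpen U) (hne : U.Nonempty) (r : ℝ) : ∃ i, r ∈ u i '' U := by
  have hopen : IsOpen[openPointTopology X] {f : C(X, ℝ) | ∃ x ∈ U, f x = r} :=
    isOpen_generateFrom_of_mem ⟨U, r, hU, rfl⟩
  obtain ⟨x, hx⟩ := hne
  exact @DenseRange.exists_mem_open _ (openPointTopology X) _ _ _ hu hopen
    ⟨ContinuousMap.const X r, x, hx, rfl⟩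

theorem IsOpen.isISet_of_separableSpace_openPointTopology {X : Type*} [TopologicalSpace X]
    (hsep : @SeparableSpace C(X, ℝ) (openPointTopology X)) {U : Set X} (hU : IsOpen U)
    (hne : U.Nonempty) : IsISet U := by
  obtain ⟨u, hu⟩ := @exists_dense_seq _ (openPointTopology X) hsep _
  exact isISet_of_forall_mem_image u (exists_mem_image_of_denseRange_openPointTopology hu hU hne)

/-- If `C_h(X)` is separable, then `X` has a π-network consisting of 𝓘-sets. -/
theorem stmt19 {X : Type*} [TopologicalSpace X]
    (hsep : @SeparableSpace C(X, ℝ) (openPointTopology X)) :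
    ∃ γ : Set (Set X), IsPiNetwork γ ∧ ∀ A ∈ γ, IsISet A :=
  ⟨{U | IsOpen U ∧ U.Nonempty},
    ⟨fun _ hU => hU.2, fun U hU hne => ⟨U, ⟨hU, hne⟩, subset_rfl⟩⟩,
    fun _ hU => hU.1.isISet_of_separableSpace_openPointTopology hsep hU.2⟩
end
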